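/- Let n, r be positive integers with r ≤ n, let 2 ≤ d_1 ≤ ... ≤ d_r, and let α_r = r + (n - d_1 - ... - d_r)/d_r. Suppose d_1 + ... + d_r ≤ n. Then for all real b_0 > 0 and all reals b_1, ..., b_r ≥ 0 with b_r = 0, setting a = min_{1 ≤ j ≤ r} (b_0 d_j + b_j), one has n b_0 + b_1 + ... + b_r ≥ α_r · a. -/

import Mathlib

/-! Summing `a ≤ b₀ d_j + b_j` over `j` gives `r a ≤ b₀ ∑ d_j + ∑ b_j`; since `b_r = 0`, also
`a ≤ b₀ d_r`, which pays for the remaining `(n - ∑ d_j) / d_r` copies of `a` with `(n - ∑ d_j) b₀`. -/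

open Finset

theorem div_mul_le_mul_of_le_mul {m D a c : ℝ} (hm : 0 ≤ m) (hD : 0 < D) (ha : a ≤ c * D) :
    m / D * a ≤ m * c :=
  calc m / D * a ≤ m / D * (c * D) := by gcongr
    _ = m * c := by field_simp

/-- key inequality (ineq8): if `∑ d j ≤ n` and `b r = 0`, then
`n b 0 + b 1 + ... + b r ≥ α_r ⬝ min_j (b 0 * d j + b j)`. -/
theorem stmt_6 (n r : ℕ) (hr : 0 < r)
    (d : Fin r → ℕ) (hd : ∀ i, 2 ≤ d i)
    (hsum : ∑ i, d i ≤ n)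
    (αr : ℝ)
    (hαr : αr = (r : ℝ) + ((n : ℝ) - ∑ i, (d i : ℝ)) / (d ⟨r - 1, by omega⟩ : ℝ))
    (b0 : ℝ) (b : Fin r → ℝ)
    (hbr : b ⟨r - 1, by omega⟩ = 0)
    (a : ℝ)
    (ha : a = Finset.univ.inf'
      (Finset.univ_nonempty_iff.mpr ⟨⟨0, hr⟩⟩) (fun j : Fin r => b0 * (d j : ℝ) + b j)) :
    (n : ℝ) * b0 + ∑ j, b j ≥ αr * a := by
  set last : Fin r := ⟨r - 1, by omega⟩
  have ha_le : ∀ j, a ≤ b0 * d j + b j := fun j => ha ▸ inf'_le _ (mem_univ j)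
  have hr_mul : (r : ℝ) * a ≤ b0 * ∑ i, (d i : ℝ) + ∑ j, b j := by
    simpa [sum_add_distrib, mul_sum] using card_nsmul_le_sum univ _ a fun j _ => ha_le j
  have hsum' : ∑ i, (d i : ℝ) ≤ n := by exact_mod_cast hsum
  have hlast : a ≤ b0 * d last := by simpa [last, hbr] using ha_le last
  have htail : ((n : ℝ) - ∑ i, (d i : ℝ)) / d last * a ≤ ((n : ℝ) - ∑ i, (d i : ℝ)) * b0 :=
    div_mul_le_mul_of_le_mul (by linarith) (by have := hd last; positivity) hlast
  rw [hαr, add_mul]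
  linarith
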